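/- arXiv:2407.16459 — 5 statements merged into one kernel-verified Lean document; each statement's English description precedes it below -/
import Mathlib

section
/- Let 𝒢 be a transitive subgroup of S₅. Then G, viewed as an 𝔽₂[𝒢]-module, is simple (it is nonzero and its only 𝔽₂[𝒢]-submodules are 0 and G) and faithful (the only element of 𝒢 acting as the identity on G is the identity). -/
/-!
Write `a ~ b` when `e_a - e_b ∈ p`. For a `𝒢`-stable submodule `p` this is a `𝒢`-invariant
equivalence relation, so its classes are blocks. A transitive group of prime degree is
primitive, so as soon as `p` contains one `e_a - e_b` with `a ≠ b` it contains all of them,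
and these span the zero-sum vectors. A nonzero zero-sum vector of `𝔽₂⁵` has weight 2 or 4;
in the second case it is `1 - e_m`, and subtracting its image under some `π` with `π m ≠ m`
leaves `e_{π m} - e_m`. For faithfulness, `π` fixing `e_i - e_k` forces `π i ∈ {i, k}`, and
`k` can be chosen in two ways.
-/

/-- The zero-sum submodule `G ⊆ (𝔽₂)⁵`. -/
def Gsub : Submodule (ZMod 2) (Fin 5 → ZMod 2) where
  carrier := {v | ∑ i, v i = 0}
  add_mem' := by
    intro a b ha hb
    simp only [Set.mem_setOf_eq] at *
    simp [Finset.sum_add_distrib, ha, hb]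
  zero_mem' := by simp
  smul_mem' := by
    intro c a ha
    simp only [Set.mem_setOf_eq] at *
    simp [← Finset.mul_sum, ha]

open Equiv MulAction

theorem MulAction.IsPreprimitive.rel_of_rel_of_ne {G X : Type*} [Group G] [MulAction G X]
    [IsPreprimitive G X] (r : Setoid X) (hr : ∀ (g : G) {x y}, r x y → r (g • x) (g • y))
    {a b : X} (hab : a ≠ b) (h : r a b) (x : X) : r a x := by
  have hr_iff (g : G) (x y : X) : r (g • x) (g • y) ↔ r x y :=
    ⟨fun h => by simpa using hr g⁻¹ h, hr g⟩
  have hB : IsBlock G {x | r a x} := by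
    rw [isBlock_iff_smul_eq_of_mem]
    intro g y hy hgy
    have hga : r a (g • a) := r.trans hgy (r.symm (hr g hy))
    ext z
    rw [Set.mem_smul_set_iff_inv_smul_mem, Set.mem_ofPred, Set.mem_ofPred, ← hr_iff g,
      smul_inv_smul]
    exact ⟨r.trans hga, r.trans (r.symm hga)⟩
  rcases IsPreprimitive.isTrivialBlock_of_isBlock hB with hsub | huniv
  · exact absurd (hsub (r.refl a) h) hab
  · exact (Set.eq_univ_iff_forall.mp huniv x :)

lemma isPretransitive_of_forall_exists {ι : Type*} {𝒢 : Subgroup (Perm ι)}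
    (htrans : ∀ i j : ι, ∃ π ∈ 𝒢, π i = j) : IsPretransitive 𝒢 ι :=
  ⟨fun i j => let ⟨π, hπ, h⟩ := htrans i j; ⟨⟨π, hπ⟩, h⟩⟩

section SingleSub

variable {R ι : Type*} [Ring R] [DecidableEq ι]

lemma perm_inv_comp_single (π : Perm ι) (i : ι) (c : R) :
    (fun j => (Pi.single i c : ι → R) (π⁻¹ j)) = Pi.single (π i) c :=
  Pi.single_comp_equiv (π⁻¹ : Perm ι) i c

lemma perm_inv_comp_single_sub_single (π : Perm ι) (a b : ι) (c : R) :
    (fun j => (Pi.single a c - Pi.single b c : ι → R) (π⁻¹ j)) =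
      Pi.single (π a) c - Pi.single (π b) c := by
  rw [← perm_inv_comp_single π a, ← perm_inv_comp_single π b]
  rfl

lemma one_sub_single_sub_perm_inv_comp (π : Perm ι) (m : ι) :
    (1 - Pi.single m 1 : ι → R) - (fun j => (1 - Pi.single m 1 : ι → R) (π⁻¹ j)) =
      Pi.single (π m) 1 - Pi.single m 1 := by
  rw [← perm_inv_comp_single π m]
  ext j
  simp

lemma sum_smul_single_sub_single [Fintype ι] {w : ι → R} (hw : ∑ i, w i = 0) (a : ι) :
    ∑ x, w x • (Pi.single x 1 - Pi.single a 1 : ι → R) = w := by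
  simp [smul_sub, Finset.sum_sub_distrib, ← Finset.sum_smul, hw, ← pi_eq_sum_univ']

def singleSubSetoid (p : Submodule R (ι → R)) : Setoid ι where
  r a b := Pi.single a 1 - Pi.single b 1 ∈ p
  iseqv :=
    { refl a := by simp
      symm {a b} h := by rw [← neg_sub]; exact p.neg_mem h
      trans {a b c} h₁ h₂ := by
        rw [← sub_add_sub_cancel _ (Pi.single b 1)]; exact p.add_mem h₁ h₂ }

variable {𝒢 : Subgroup (Perm ι)} {p : Submodule R (ι → R)}

lemma singleSubSetoid_smul (hstab : ∀ π ∈ 𝒢, ∀ v ∈ p, (fun j => v (π⁻¹ j)) ∈ p)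
    (g : 𝒢) {a b : ι} (h : singleSubSetoid p a b) : singleSubSetoid p (g • a) (g • b) := by
  have := hstab g g.2 _ h
  rwa [perm_inv_comp_single_sub_single] at this

lemma exists_singleSubSetoid_of_one_sub_single_mem [Nontrivial ι]
    (htrans : ∀ i j : ι, ∃ π ∈ 𝒢, π i = j)
    (hstab : ∀ π ∈ 𝒢, ∀ v ∈ p, (fun j => v (π⁻¹ j)) ∈ p) {m : ι}
    (hm : 1 - Pi.single m 1 ∈ p) : ∃ a b, a ≠ b ∧ singleSubSetoid p a b := by
  obtain ⟨m', hm'⟩ := exists_ne m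
  obtain ⟨π, hπ, hπm⟩ := htrans m m'
  have := p.sub_mem hm (hstab π hπ _ hm)
  rw [one_sub_single_sub_perm_inv_comp, hπm] at this
  exact ⟨m', m, hm', this⟩

lemma mem_of_sum_eq_zero_of_singleSubSetoid [Fintype ι] [IsPretransitive 𝒢 ι]
    (hcard : (Nat.card ι).Prime)
    (hstab : ∀ π ∈ 𝒢, ∀ v ∈ p, (fun j => v (π⁻¹ j)) ∈ p)
    {a b : ι} (hab : a ≠ b) (hrel : singleSubSetoid p a b) {w : ι → R}
    (hw : ∑ i, w i = 0) : w ∈ p := by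
  have : IsPreprimitive 𝒢 ι := .of_prime_card hcard
  have hrel_all (x : ι) : singleSubSetoid p x a :=
    (singleSubSetoid p).symm <|
      IsPreprimitive.rel_of_rel_of_ne _ (singleSubSetoid_smul hstab) hab hrel x
  rw [← sum_smul_single_sub_single hw a]
  exact p.sum_mem fun x _ => p.smul_mem _ (hrel_all x)

lemma eq_one_of_forall_perm_inv_comp_single_sub_single [Nontrivial R] [Fintype ι]
    (hι : 2 < Fintype.card ι) {π : Perm ι}
    (h : ∀ a b, (fun j => (Pi.single a 1 - Pi.single b 1 : ι → R) (π⁻¹ j)) =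
      Pi.single a 1 - Pi.single b 1) : π = 1 := by
  ext i
  by_contra hπi
  obtain ⟨k, -, hk⟩ : ∃ k ∈ Finset.univ, k ∉ ({i, π i} : Finset ι) :=
    Finset.exists_mem_notMem_of_card_lt_card (Finset.card_le_two.trans_lt hι)
  simp only [Finset.mem_insert, Finset.mem_singleton, not_or] at hk
  exact hπi <| by
    simpa [Pi.single_apply, hk.2, Ne.symm hk.1] using congrFun (h i k) (π i)

end SingleSub

lemma mem_Gsub {v : Fin 5 → ZMod 2} : v ∈ Gsub ↔ ∑ i, v i = 0 := Iff.rfl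

lemma single_sub_single_mem_Gsub (a b : Fin 5) : Pi.single a 1 - Pi.single b 1 ∈ Gsub := by
  simp [mem_Gsub, Finset.sum_sub_distrib]

lemma eq_single_sub_single_or_eq_one_sub_single_of_sum_eq_zero :
    ∀ v : Fin 5 → ZMod 2, ∑ i, v i = 0 → v ≠ 0 →
      (∃ a b, a ≠ b ∧ v = Pi.single a 1 - Pi.single b 1) ∨
        ∃ m, v = 1 - Pi.single m 1 := by
  decide

/-- If `𝒢` is a transitive subgroup of `S₅`, then the zero-sum module `G` is a simple
and faithful `𝔽₂[𝒢]`-module (the action being `(π • v) j = v (π⁻¹ j)`). -/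
theorem stmt1 (𝒢 : Subgroup (Equiv.Perm (Fin 5)))
    (htrans : ∀ i j : Fin 5, ∃ π ∈ 𝒢, π i = j) :
    -- `G` is nonzero
    Gsub ≠ ⊥ ∧
    -- the only `𝒢`-stable `𝔽₂`-submodules contained in `G` are `0` and `G`
    (∀ p : Submodule (ZMod 2) (Fin 5 → ZMod 2), p ≤ Gsub →
      (∀ π ∈ 𝒢, ∀ v ∈ p, (fun j => v (π⁻¹ j)) ∈ p) → p = ⊥ ∨ p = Gsub) ∧
    -- the action of `𝒢` on `G` is faithful
    (∀ π ∈ 𝒢, (∀ v ∈ Gsub, (fun j => v (π⁻¹ j)) = v) → π = 1) := by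
  refine ⟨?_, fun p hpG hstab => ?_, fun π _ h => ?_⟩
  · exact (Submodule.ne_bot_iff _).mpr ⟨_, single_sub_single_mem_Gsub 0 1, by decide⟩
  · refine or_iff_not_imp_left.mpr fun hp => le_antisymm hpG fun w hw => ?_
    obtain ⟨v, hv, hv0⟩ := Submodule.exists_mem_ne_zero_of_ne_bot hp
    obtain ⟨a, b, hab, hrel⟩ : ∃ a b, a ≠ b ∧ singleSubSetoid p a b := by
      rcases eq_single_sub_single_or_eq_one_sub_single_of_sum_eq_zero v (hpG hv) hv0 with
        ⟨a, b, hab, rfl⟩ | ⟨m, rfl⟩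
      · exact ⟨a, b, hab, hv⟩
      · exact exists_singleSubSetoid_of_one_sub_single_mem htrans hstab hv
    have := isPretransitive_of_forall_exists htrans
    exact mem_of_sum_eq_zero_of_singleSubSetoid (by norm_num) hstab hab hrel hw
  · exact eq_one_of_forall_perm_inv_comp_single_sub_single (by simp)
      fun a b => h _ (single_sub_single_mem_Gsub a b)
end

section
/- Let 𝒢 be a transitive subgroup of S₅. Then the first group cohomology H¹(𝒢, G) vanishes. -/
open Equiv Function Finset

def IsPermCocycle {α M : Type*} [AddCommGroup M] {𝒢 : Subgroup (Perm α)} (f : 𝒢 → α → M) :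
    Prop :=
  ∀ g h : 𝒢, f (g * h) = f g + fun j => f h ((g : Perm α)⁻¹ j)

namespace IsPermCocycle

variable {α M : Type*} [AddCommGroup M] {𝒢 : Subgroup (Perm α)} {f : 𝒢 → α → M}

theorem map_one (hf : IsPermCocycle f) : f 1 = 0 := by
  simpa using hf 1 1

theorem pow_apply (hf : IsPermCocycle f) (h : 𝒢) (n : ℕ) (j : α) :
    f (h ^ n) j = ∑ k ∈ range n, f h (((h : Perm α) ^ k)⁻¹ j) := by
  induction n with
  | zero => simp [hf.map_one]
  | succ n ih => rw [pow_succ, hf, Pi.add_apply, ih, sum_range_succ, Subgroup.coe_pow]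

theorem pow_apply_of_apply_eq (hf : IsPermCocycle f) {h : 𝒢} {a : α} (ha : (h : Perm α) a = a)
    (n : ℕ) : f (h ^ n) a = n • f h a := by
  have hpow : ∀ k : ℕ, ((h : Perm α) ^ k)⁻¹ a = a := fun k =>
    Perm.inv_eq_iff_eq.mpr (Perm.pow_apply_eq_self_of_apply_eq_self ha k).symm
  simp [hf.pow_apply, hpow]

theorem sum_range_apply_eq_zero (hf : IsPermCocycle f) {h : 𝒢} {n : ℕ} (hn : h ^ n = 1)
    (j : α) : ∑ k ∈ range n, f h (((h : Perm α) ^ k)⁻¹ j) = 0 := by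
  rw [← hf.pow_apply, hn, hf.map_one, Pi.zero_apply]

theorem apply_smul_eq_of_commute (hf : IsPermCocycle f) {s h : 𝒢} (hsh : Commute s h) {a : α}
    (ha : (h : Perm α) a = a) : f h ((s : Perm α) a) = f h a := by
  have hfix : (h : Perm α)⁻¹ ((s : Perm α) a) = (s : Perm α) a := by
    rw [Perm.inv_eq_iff_eq, ← Perm.mul_apply, ← Subgroup.coe_mul, ← hsh.eq, Subgroup.coe_mul,
      Perm.mul_apply, ha]
  have := congrFun (congrArg f hsh.eq) ((s : Perm α) a)
  rw [hf, hf, Pi.add_apply, Pi.add_apply, Perm.coe_inv, symm_apply_apply, hfix, add_comm,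
    add_left_inj] at this
  exact this.symm

-- Shapiro's lemma for the permutation module `α → M`, induced from the stabilizer of `a`.
theorem exists_eq_sub_of_apply_eq_zero (hf : IsPermCocycle f) {a : α}
    (htrans : ∀ j, ∃ s ∈ 𝒢, s a = j) (hstab : ∀ g : 𝒢, (g : Perm α) a = a → f g a = 0) :
    ∃ x : α → M, ∀ g : 𝒢, f g = (fun j => x ((g : Perm α)⁻¹ j)) - x := by
  choose σ hσ𝒢 hσ using htrans
  let σ' : α → 𝒢 := fun j => ⟨σ j, hσ𝒢 j⟩
  refine ⟨fun j => -f (σ' j) j, fun g => funext fun j => ?_⟩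
  set i := (g : Perm α)⁻¹ j
  have hσinv : ∀ j, (σ j)⁻¹ j = a := fun j => Perm.inv_eq_iff_eq.mpr (hσ j).symm
  have hstab_mem : (((σ' j)⁻¹ * g * σ' i : 𝒢) : Perm α) a = a := by
    simpa [σ', hσ, i] using hσinv j
  have hsplit : g * σ' i = σ' j * ((σ' j)⁻¹ * g * σ' i) := by group
  have := congrFun (congrArg f hsplit) j
  rw [hf, hf, Pi.add_apply, Pi.add_apply, hσinv, hstab _ hstab_mem,
    add_zero] at this
  exact (eq_sub_of_add_eq this).trans (neg_sub_neg _ _).symm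

end IsPermCocycle

theorem Equiv.Perm.commute_swap_of_apply_eq {α : Type*} [DecidableEq α] {h : Perm α} {x y : α}
    (hx : h x = x) (hy : h y = y) : Commute (swap x y) h := by
  have := swap_apply_apply h x y
  rw [hx, hy, eq_mul_inv_iff_mul_eq] at this
  exact this

theorem Equiv.Perm.subgroup_eq_top_of_isSwap_mem_of_transitive {α : Type*} [Finite α]
    [DecidableEq α] (hα : (Nat.card α).Prime) {𝒢 : Subgroup (Perm α)}
    (htrans : ∀ i j : α, ∃ π ∈ 𝒢, π i = j) {τ : Perm α} (hτ : τ.IsSwap) (hτ𝒢 : τ ∈ 𝒢) :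
    𝒢 = ⊤ := by
  have : MulAction.IsPretransitive 𝒢 α :=
    ⟨fun i j => let ⟨π, hπ, hπij⟩ := htrans i j; ⟨⟨π, hπ⟩, hπij⟩⟩
  exact subgroup_eq_top_of_isPreprimitive_of_isSwap_mem
    (MulAction.IsPreprimitive.of_prime_card hα) τ hτ hτ𝒢

theorem Fin.sum_univ_five_of_injective {M : Type*} [AddCommMonoid M] (F : Fin 5 → M)
    {a b c d e : Fin 5} (hv : Injective ![a, b, c, d, e]) :
    ∑ j, F j = F a + F b + F c + F d + F e := by
  rw [← (Equiv.ofBijective _ hv.bijective_of_finite).sum_comp F, Fin.sum_univ_five]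
  rfl

-- The cycle types of the stabilizer of `0`; each cycle of length `n` is listed as the orbit
-- `p, (h ^ 1)⁻¹ p, …, (h ^ (n - 1))⁻¹ p`, the shape in which `sum_range_apply_eq_zero` sees it.
set_option maxRecDepth 40000 in
theorem Equiv.Perm.fin_five_cases_of_apply_zero :
    ∀ h : Perm (Fin 5), h 0 = 0 →
      h ^ 3 = 1 ∨
      (h ^ 4 = 1 ∧ ∃ p, Injective ![0, p, (h ^ 1)⁻¹ p, (h ^ 2)⁻¹ p, (h ^ 3)⁻¹ p]) ∨
      (h ^ 2 = 1 ∧ ∃ p q, Injective ![0, p, (h ^ 1)⁻¹ p, q, (h ^ 1)⁻¹ q]) ∨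
      (h ^ 2 = 1 ∧ ∃ p k l, Injective ![0, p, (h ^ 1)⁻¹ p, k, l] ∧
        h = swap p ((h ^ 1)⁻¹ p) ∧ h k = k ∧ h l = l) := by
  decide

theorem IsPermCocycle.apply_zero_eq_zero_of_mem_Gsub {𝒢 : Subgroup (Perm (Fin 5))}
    (htrans : ∀ i j : Fin 5, ∃ π ∈ 𝒢, π i = j) {f : 𝒢 → Fin 5 → ZMod 2} (hf : IsPermCocycle f)
    (hmem : ∀ g, f g ∈ Gsub) (h : 𝒢) (h0 : (h : Perm (Fin 5)) 0 = 0) : f h 0 = 0 := by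
  have hpow : ∀ n, (h : Perm (Fin 5)) ^ n = 1 → h ^ n = 1 := fun n hn =>
    Subtype.ext (by rw [Subgroup.coe_pow, hn, Subgroup.coe_one])
  have horbit := fun n hn j => hf.sum_range_apply_eq_zero (h := h) (n := n) (hpow n hn) j
  have hsum : ∑ j, f h j = 0 := hmem h
  rcases Perm.fin_five_cases_of_apply_zero h h0 with
    h3 | ⟨h4, p, hp⟩ | ⟨h2, p, q, hpq⟩ | ⟨h2, p, k, l, hpkl, hswap, hk, hl⟩
  · have := hf.pow_apply_of_apply_eq h0 3
    rw [hpow 3 h3, hf.map_one, Pi.zero_apply] at this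
    grind
  · have hp_orbit := horbit 4 h4 p
    simp only [sum_range_succ, sum_range_zero, zero_add, pow_zero, inv_one, Perm.one_apply]
      at hp_orbit
    rw [Fin.sum_univ_five_of_injective _ hp] at hsum
    linear_combination hsum - hp_orbit
  · have hp_orbit := horbit 2 h2 p
    have hq_orbit := horbit 2 h2 q
    simp only [sum_range_succ, sum_range_zero, zero_add, pow_zero, inv_one, Perm.one_apply]
      at hp_orbit hq_orbit
    rw [Fin.sum_univ_five_of_injective _ hpq] at hsum
    linear_combination hsum - hp_orbit - hq_orbit
  · have hp_orbit := horbit 2 h2 p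
    simp only [sum_range_succ, sum_range_zero, zero_add, pow_zero, inv_one, Perm.one_apply]
      at hp_orbit
    rw [Fin.sum_univ_five_of_injective _ hpkl] at hsum
    have htop : 𝒢 = ⊤ := Perm.subgroup_eq_top_of_isSwap_mem_of_transitive
      (by norm_num) htrans ⟨p, _, hpkl.ne (a₁ := 1) (a₂ := 2) (by decide), hswap⟩ h.2
    have hfixed : ∀ m, (h : Perm (Fin 5)) m = m → f h m = f h 0 := fun m hm => by
      simpa using hf.apply_smul_eq_of_commute (s := ⟨swap 0 m, htop ▸ Subgroup.mem_top _⟩)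
        (Subtype.ext (Perm.commute_swap_of_apply_eq h0 hm)) h0
    rw [hfixed k hk, hfixed l hl] at hsum
    grind

theorem exists_mem_Gsub_comp_sub_eq (x : Fin 5 → ZMod 2) :
    ∃ y ∈ Gsub, ∀ g : Perm (Fin 5), (fun j => y (g⁻¹ j)) - y = (fun j => x (g⁻¹ j)) - x := by
  refine ⟨x + fun _ => ∑ i, x i, ?_, fun g => funext fun j => ?_⟩
  · show ∑ j, (x j + ∑ i, x i) = 0
    rw [sum_add_distrib, sum_const, card_univ, Fintype.card_fin]
    grind
  · simp only [Pi.sub_apply, Pi.add_apply]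
    ring

/-- If `𝒢` is a transitive subgroup of `S₅`, then `H¹(𝒢, G) = 0`: every `1`-cocycle
`f : 𝒢 → G` (for the action `(π • v) j = v (π⁻¹ j)`) is a coboundary. -/
theorem stmt2 (𝒢 : Subgroup (Equiv.Perm (Fin 5)))
    (htrans : ∀ i j : Fin 5, ∃ π ∈ 𝒢, π i = j)
    (f : 𝒢 → (Fin 5 → ZMod 2))
    (hmem : ∀ g, f g ∈ Gsub)
    (hcoc : ∀ g h : 𝒢, f (g * h) = f g + fun j => f h ((g : Equiv.Perm (Fin 5))⁻¹ j)) :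
    ∃ x ∈ Gsub, ∀ g : 𝒢, f g = (fun j => x ((g : Equiv.Perm (Fin 5))⁻¹ j)) - x := by
  have hstab : ∀ g : 𝒢, (g : Perm (Fin 5)) 0 = 0 → f g 0 = 0 :=
    IsPermCocycle.apply_zero_eq_zero_of_mem_Gsub htrans hcoc hmem
  obtain ⟨x, hx⟩ := IsPermCocycle.exists_eq_sub_of_apply_eq_zero hcoc (htrans 0) hstab
  obtain ⟨y, hy, hyx⟩ := exists_mem_Gsub_comp_sub_eq x
  exact ⟨y, hy, fun g => (hx g).trans (hyx g).symm⟩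
end

section
/- Let W = (ℤ/2)⁵ ⋊ S₅ act on Δ = {1,...,5} × ℤ/2 as specified. A subgroup H ≤ W is conjugate, by an element of the subgroup (ℤ/2)⁵ ⋊ {1}, to a subgroup of {0} ⋊ S₅ if and only if there exists a subset T ⊆ Δ that the first projection maps bijectively onto {1,...,5} and that is setwise stable under the action of H. -/
/-!
Conjugating `w = (ε, π)` by `(h, 1)` replaces `ε` by `h + ε - π • h`, so some such conjugate of `H`
lies in `S₅` iff `w ↦ ε` is a coboundary `π • h - h` on `H`. A set `T` mapped bijectively onto
`{1, …, 5}` is the graph of some `f`, and `w` maps the graph of `f` to the graph of `π • f + ε`;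
so `T` is `H`-stable iff `ε = f - π • f` on `H`. The two conditions match via `f = -h`.
-/

/-- The coordinate-permutation automorphism of `(ℤ/2)⁵`: `(π • ε) j = ε (π⁻¹ j)`. -/
def permAddAut (π : Equiv.Perm (Fin 5)) : (Fin 5 → ZMod 2) ≃+ (Fin 5 → ZMod 2) where
  toFun v := fun j => v (π⁻¹ j)
  invFun v := fun j => v (π j)
  left_inv v := by funext j; simp
  right_inv v := by funext j; simp
  map_add' a b := rfl

/-- The action of `S₅` on `(ℤ/2)⁵` as a homomorphism to the automorphism group. -/
def wAut : Equiv.Perm (Fin 5) →* MulAut (Multiplicative (Fin 5 → ZMod 2)) where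
  toFun π := AddEquiv.toMultiplicative (permAddAut π)
  map_one' := by
    apply MulEquiv.ext
    intro v
    rfl
  map_mul' := by
    intro σ τ
    apply MulEquiv.ext
    intro v
    show Multiplicative.ofAdd (permAddAut (σ * τ) (Multiplicative.toAdd v)) =
      Multiplicative.ofAdd (permAddAut σ (permAddAut τ (Multiplicative.toAdd v)))
    have : permAddAut (σ * τ) (Multiplicative.toAdd v) =
        permAddAut σ (permAddAut τ (Multiplicative.toAdd v)) := by
      funext j
      simp [permAddAut, mul_inv_rev]
    rw [this]

/-- The wreath product `W = (ℤ/2)⁵ ⋊ S₅`. -/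
abbrev W : Type := SemidirectProduct (Multiplicative (Fin 5 → ZMod 2)) (Equiv.Perm (Fin 5)) wAut

/-- The action of `W` on `Δ = {1,…,5} × ℤ/2`: `(ε, π) • (i, x) = (π i, x + ε (π i))`. -/
def act (w : W) (d : Fin 5 × ZMod 2) : Fin 5 × ZMod 2 :=
  (w.right d.1, d.2 + Multiplicative.toAdd w.left (w.right d.1))

namespace SemidirectProduct

variable {N G : Type*} [Group N] [Group G] {φ : G →* MulAut N}

lemma mem_range_inr_iff {x : N ⋊[φ] G} : x ∈ (inr : G →* N ⋊[φ] G).range ↔ x.left = 1 :=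
  ⟨fun ⟨g, hg⟩ => hg ▸ left_inr g, fun hx => ⟨x.right, by ext <;> simp [hx]⟩⟩

lemma conj_inl_left (n : N) (x : N ⋊[φ] G) :
    (MulAut.conj (inl n) x).left = n * x.left * φ x.right n⁻¹ := by
  simp [mul_left, inv_left]

end SemidirectProduct

namespace Set

variable {α β : Type*}

lemma bijOn_fst_univ_iff_exists_eq_graphOn {s : Set (α × β)} :
    BijOn Prod.fst s univ ↔ ∃ f : α → β, univ.graphOn f = s := by
  refine ⟨fun ⟨_, hinj, hsurj⟩ => (exists_eq_mgraphOn_univ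
    ⟨fun a b h => Subtype.ext (hinj a.2 b.2 h), fun x => ?_⟩).imp fun _ => Eq.symm, ?_⟩
  · obtain ⟨p, hp, rfl⟩ := hsurj (mem_univ x)
    exact ⟨⟨p, hp⟩, rfl⟩
  · rintro ⟨f, rfl⟩
    simpa only [image_fst_graphOn] using (fst_injOn_graph (s := univ) (f := f)).bijOn_image

end Set

lemma permAddAut_apply (π : Equiv.Perm (Fin 5)) (v : Fin 5 → ZMod 2) (j : Fin 5) :
    permAddAut π v j = v (π⁻¹ j) := rfl

lemma toAdd_wAut (π : Equiv.Perm (Fin 5)) (x : Multiplicative (Fin 5 → ZMod 2)) :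
    Multiplicative.toAdd (wAut π x) = permAddAut π (Multiplicative.toAdd x) := rfl

lemma conj_inl_mem_range_inr_iff (h : Multiplicative (Fin 5 → ZMod 2)) (w : W) :
    MulAut.conj (SemidirectProduct.inl h) w ∈ (SemidirectProduct.inr (φ := wAut)).range ↔
      Multiplicative.toAdd w.left =
        permAddAut w.right (Multiplicative.toAdd h) - Multiplicative.toAdd h := by
  rw [SemidirectProduct.mem_range_inr_iff, SemidirectProduct.conj_inl_left,
    ← toAdd_eq_zero, toAdd_mul, toAdd_mul, toAdd_wAut, toAdd_inv, map_neg]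
  constructor <;> intro h' <;> linear_combination h'

lemma act_image_graphOn (w : W) (f : Fin 5 → ZMod 2) :
    act w '' Set.univ.graphOn f =
      Set.univ.graphOn (permAddAut w.right f + Multiplicative.toAdd w.left) := by
  ext ⟨j, y⟩
  simp [act, permAddAut_apply, ← Equiv.Perm.eq_inv_iff_eq]

/-- A subgroup `H ≤ W` is conjugate, by an element of the subgroup `(ℤ/2)⁵ ⋊ {1}`
(the range of `inl`), to a subgroup of `{0} ⋊ S₅` (the range of `inr`) if and only if
there exists a subset `T ⊆ Δ` that the first projection maps bijectively onto
`{1,…,5}` and that is setwise stable under the action of `H`. -/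
theorem stmt8 (H : Subgroup W) :
    (∃ h : Multiplicative (Fin 5 → ZMod 2),
      Subgroup.map (MulAut.conj (SemidirectProduct.inl (φ := wAut) h)).toMonoidHom H ≤
        (SemidirectProduct.inr (φ := wAut)).range) ↔
    (∃ T : Set (Fin 5 × ZMod 2),
      Set.BijOn Prod.fst T (Set.univ : Set (Fin 5)) ∧ ∀ w ∈ H, act w '' T = T) := by
  simp only [Subgroup.map_le_iff_le_comap]
  simp only [SetLike.le_def, Subgroup.mem_comap, MulEquiv.coe_toMonoidHom,
    conj_inl_mem_range_inr_iff, Set.bijOn_fst_univ_iff_exists_eq_graphOn, exists_exists_eq_and,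
    act_image_graphOn, Set.graphOn_univ_inj]
  constructor
  · rintro ⟨h, hH⟩
    exact ⟨-Multiplicative.toAdd h, fun w hw => by
      rw [map_neg]; linear_combination hH hw⟩
  · rintro ⟨f, hH⟩
    exact ⟨Multiplicative.ofAdd (-f), fun w hw => by
      simp only [toAdd_ofAdd, map_neg]; linear_combination hH w hw⟩
end

section
/- Let 𝒢 be a transitive subgroup of S₅ and let t ≥ 0. Then every group homomorphism from the semidirect product Gᵗ ⋊ 𝒢 (for the diagonal action of 𝒢 on Gᵗ) to a commutative group is trivial on the subgroup Gᵗ ⋊ {1}; equivalently, the commutator subgroup of Gᵗ ⋊ 𝒢 contains Gᵗ ⋊ {1}. -/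
set_option synthInstance.maxHeartbeats 1000000
set_option maxHeartbeats 1000000

def permSMulG (π : Equiv.Perm (Fin 5)) (v : Gsub) : Gsub :=
  ⟨fun j => (v : Fin 5 → ZMod 2) (π⁻¹ j), by
    have h : ∑ j, (v : Fin 5 → ZMod 2) (π⁻¹ j) = ∑ j, (v : Fin 5 → ZMod 2) j :=
      Equiv.sum_comp π⁻¹ _
    show ∑ j, (v : Fin 5 → ZMod 2) (π⁻¹ j) = 0
    rw [h]
    exact v.2⟩

lemma permSMulG_mul (σ τ : Equiv.Perm (Fin 5)) (v : Gsub) :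
    permSMulG (σ * τ) v = permSMulG σ (permSMulG τ v) := by
  apply Subtype.ext
  funext j
  show (v : Fin 5 → ZMod 2) ((σ * τ)⁻¹ j) = (v : Fin 5 → ZMod 2) (τ⁻¹ (σ⁻¹ j))
  rw [mul_inv_rev]
  rfl

/-- The diagonal action of a permutation on `Gᵗ` as an additive automorphism. -/
def diagAddAut (π : Equiv.Perm (Fin 5)) (t : ℕ) : (Fin t → Gsub) ≃+ (Fin t → Gsub) where
  toFun f := fun i => permSMulG π (f i)
  invFun f := fun i => permSMulG π⁻¹ (f i)
  left_inv f := by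
    funext i
    apply Subtype.ext
    funext j
    simp [permSMulG]
  right_inv f := by
    funext i
    apply Subtype.ext
    funext j
    simp [permSMulG]
  map_add' a b := rfl

/-- The diagonal action of `𝒢` on `Gᵗ` as a homomorphism to the automorphism group. -/
def diagAut (𝒢 : Subgroup (Equiv.Perm (Fin 5))) (t : ℕ) :
    𝒢 →* MulAut (Multiplicative (Fin t → Gsub)) where
  toFun σ := AddEquiv.toMultiplicative (diagAddAut (σ : Equiv.Perm (Fin 5)) t)
  map_one' := by
    apply MulEquiv.ext
    intro v
    rfl
  map_mul' := by
    intro σ τ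
    apply MulEquiv.ext
    intro v
    show Multiplicative.ofAdd
        (diagAddAut ((σ * τ : 𝒢) : Equiv.Perm (Fin 5)) t (Multiplicative.toAdd v)) =
      Multiplicative.ofAdd (diagAddAut (σ : Equiv.Perm (Fin 5)) t
        (diagAddAut (τ : Equiv.Perm (Fin 5)) t (Multiplicative.toAdd v)))
    have : diagAddAut ((σ * τ : 𝒢) : Equiv.Perm (Fin 5)) t (Multiplicative.toAdd v) =
        diagAddAut (σ : Equiv.Perm (Fin 5)) t
          (diagAddAut (τ : Equiv.Perm (Fin 5)) t (Multiplicative.toAdd v)) := by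
      funext i
      show permSMulG ((σ : Equiv.Perm (Fin 5)) * (τ : Equiv.Perm (Fin 5))) _ = _
      rw [permSMulG_mul]
      rfl
    rw [this]

/-! For `σ ∈ 𝒢` and `n ∈ Gᵗ` the commutator `[σ, n]` is `σ n - n`, so it suffices that the
vectors `π v - v` (`π ∈ 𝒢`, `v ∈ G`) generate `G`. Applying `π - 1` to the zero-sum vectors
`e_i - e_a` and summing over `i` gives `-5 (π - 1) e_a`, because `π` fixes `∑ i, e_i`. Since `5` is
odd, `e_{π a} - e_a` is generated, hence by transitivity every `e_j - e_a`, and these span `G`. -/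

open Finset

section PermutationModule

variable {R α : Type*} [CommRing R] [Fintype α] [DecidableEq α]

theorem single_perm_sub_single_mem (hcard : IsUnit (Fintype.card α : R))
    (L : Submodule R (α → R)) {π : Equiv.Perm α}
    (hL : ∀ v : α → R, ∑ i, v i = 0 → v ∘ ⇑π⁻¹ - v ∈ L) (a : α) :
    Pi.single (π a) 1 - Pi.single a 1 ∈ L := by
  set T := LinearMap.funLeft R R ⇑π⁻¹ - LinearMap.id
  have hT : ∀ v, T v = v ∘ ⇑π⁻¹ - v := fun _ => rfl
  have hsum : ∑ i, T (Pi.single i 1 - Pi.single a 1) =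
      -(Fintype.card α : R) • T (Pi.single a 1) := by
    have hone : ∑ i : α, Pi.single (M := fun _ => R) i 1 = 1 := Finset.univ_sum_single _
    have hT1 : T 1 = 0 := sub_self _
    rw [← map_sum, sum_sub_distrib, hone, sum_const, card_univ, map_sub, hT1, zero_sub, map_nsmul,
      ← Nat.cast_smul_eq_nsmul R, neg_smul]
  have hmem : -(Fintype.card α : R) • T (Pi.single a 1) ∈ L := by
    rw [← hsum]
    refine sum_mem fun i _ => ?_
    rw [hT]
    exact hL _ (by simp [sum_sub_distrib])
  rw [Submodule.smul_mem_iff_of_isUnit _ hcard.neg, hT, Pi.single_comp_equiv] at hmem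
  exact hmem

theorem mem_of_sum_eq_zero_of_perm_sub_mem (hcard : IsUnit (Fintype.card α : R))
    (𝒢 : Subgroup (Equiv.Perm α)) (htrans : ∀ i j : α, ∃ π ∈ 𝒢, π i = j)
    (L : Submodule R (α → R)) (hL : ∀ π ∈ 𝒢, ∀ v : α → R, ∑ i, v i = 0 → v ∘ ⇑π⁻¹ - v ∈ L)
    {v : α → R} (hv : ∑ i, v i = 0) : v ∈ L := by
  cases isEmpty_or_nonempty α with
  | inl _ => exact Subsingleton.elim 0 v ▸ L.zero_mem
  | inr hα =>
    obtain ⟨a⟩ := hα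
    have hpair : ∀ j, Pi.single j 1 - Pi.single a 1 ∈ L := fun j => by
      obtain ⟨π, hπ, rfl⟩ := htrans a j
      exact single_perm_sub_single_mem hcard L (hL π hπ) a
    have hv' : v = ∑ j, v j • (Pi.single j 1 - Pi.single a 1) := by
      simp_rw [smul_sub, sum_sub_distrib, ← sum_smul, hv, zero_smul, sub_zero]
      exact pi_eq_sum_univ' v
    rw [hv']
    exact sum_mem fun j _ => L.smul_mem _ (hpair j)

end PermutationModule

theorem eq_top_of_permSMulG_sub_mem (𝒢 : Subgroup (Equiv.Perm (Fin 5)))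
    (htrans : ∀ i j : Fin 5, ∃ π ∈ 𝒢, π i = j) (L : AddSubgroup Gsub)
    (hL : ∀ π ∈ 𝒢, ∀ v, permSMulG π v - v ∈ L) : L = ⊤ := by
  refine eq_top_iff.2 fun v _ => ?_
  obtain ⟨w, hw, hwv⟩ := mem_of_sum_eq_zero_of_perm_sub_mem (by decide) 𝒢 htrans
    ((AddSubgroup.toZModSubmodule 2 L).map Gsub.subtype)
    (fun π hπ v hv => ⟨permSMulG π ⟨v, hv⟩ - ⟨v, hv⟩, hL π hπ _, rfl⟩) v.2
  exact Subtype.ext hwv ▸ hw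

theorem diagAut_ofAdd_single (𝒢 : Subgroup (Equiv.Perm (Fin 5))) (t : ℕ) (σ : 𝒢) (i : Fin t)
    (v : Gsub) :
    diagAut 𝒢 t σ (.ofAdd (Pi.single i v)) = .ofAdd (Pi.single i (permSMulG σ v)) := by
  have hzero : permSMulG σ 0 = 0 := rfl
  exact congrArg Multiplicative.ofAdd
    (funext (Pi.apply_single (fun _ => permSMulG σ) (fun _ => hzero) i v))

theorem eq_top_of_diagAut_mul_inv_mem (𝒢 : Subgroup (Equiv.Perm (Fin 5)))
    (htrans : ∀ i j : Fin 5, ∃ π ∈ 𝒢, π i = j) (t : ℕ)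
    (K : Subgroup (Multiplicative (Fin t → Gsub))) (hK : ∀ σ n, diagAut 𝒢 t σ n * n⁻¹ ∈ K) :
    K = ⊤ := by
  have hsingle : ∀ i v, Multiplicative.ofAdd (Pi.single i v) ∈ K := by
    intro i
    have hcomap : K.toAddSubgroup'.comap (AddMonoidHom.single (fun _ => Gsub) i) = ⊤ := by
      refine eq_top_of_permSMulG_sub_mem 𝒢 htrans _ fun π hπ v => ?_
      have hmem := hK ⟨π, hπ⟩ (.ofAdd (Pi.single i v))
      rwa [diagAut_ofAdd_single, ← ofAdd_neg, ← ofAdd_add, ← Pi.single_neg, ← Pi.single_add,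
        ← sub_eq_add_neg] at hmem
    exact fun v => hcomap.ge (AddSubgroup.mem_top v)
  refine eq_top_iff.2 fun n _ => ?_
  rw [← ofAdd_toAdd n, ← Finset.univ_sum_single (Multiplicative.toAdd n), ofAdd_sum]
  exact prod_mem fun i _ => hsingle i _

theorem SemidirectProduct.inl_aut_mul_inv_mem_commutator {N G : Type*} [Group N] [Group G]
    {φ : G →* MulAut N} (g : G) (n : N) : inl (φ g n * n⁻¹) ∈ commutator (N ⋊[φ] G) := by
  rw [map_mul, inl_aut, map_inv inl, map_inv inr, ← commutatorElement_def]
  exact Subgroup.commutator_mem_commutator (Subgroup.mem_top _) (Subgroup.mem_top _)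

/-- Let `𝒢` be a transitive subgroup of `S₅` and `t ≥ 0`. Every homomorphism from
`Gᵗ ⋊ 𝒢` (diagonal action) to a commutative group is trivial on the subgroup
`Gᵗ ⋊ {1}`; equivalently, the commutator subgroup of `Gᵗ ⋊ 𝒢` contains `Gᵗ ⋊ {1}`. -/
theorem stmt10 (𝒢 : Subgroup (Equiv.Perm (Fin 5)))
    (htrans : ∀ i j : Fin 5, ∃ π ∈ 𝒢, π i = j) (t : ℕ) :
    (∀ (C : Type*) [CommGroup C]
      (f : SemidirectProduct (Multiplicative (Fin t → Gsub)) 𝒢 (diagAut 𝒢 t) →* C)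
      (n : Multiplicative (Fin t → Gsub)), f (SemidirectProduct.inl n) = 1) ∧
    (SemidirectProduct.inl (φ := diagAut 𝒢 t)).range ≤
      commutator (SemidirectProduct (Multiplicative (Fin t → Gsub)) 𝒢 (diagAut 𝒢 t)) := by
  have hcomap : (commutator _).comap SemidirectProduct.inl = ⊤ :=
    eq_top_of_diagAut_mul_inv_mem 𝒢 htrans t _ SemidirectProduct.inl_aut_mul_inv_mem_commutator
  have hrange : (SemidirectProduct.inl (φ := diagAut 𝒢 t)).range ≤ commutator _ := by
    rw [MonoidHom.range_eq_map, Subgroup.map_le_iff_le_comap, hcomap]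
  exact ⟨fun C _ f n => Abelianization.commutator_subset_ker f (hrange ⟨n, rfl⟩), hrange⟩
end

section
/- Let W be a vector space over the field 𝔽₄ with four elements and let V ⊆ W be an 𝔽₂-subspace with dim_{𝔽₂} V = 3. Suppose that the 𝔽₄-linear span of V has dimension at most 2 over 𝔽₄. Then V contains a nonzero vector α such that 𝔽₄·α ⊆ V; in particular V contains a nonzero 𝔽₄-subspace of W. -/
/-- Let `W` be a vector space over the field `F = 𝔽₄` with four elements and let
`V ⊆ W` be an `𝔽₂`-subspace with `dim_{𝔽₂} V = 3` (since `char F = 2`, an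
`𝔽₂`-subspace of `W` is the same thing as an additive subgroup, and one of
`𝔽₂`-dimension `3` is one of cardinality `8`). If the `𝔽₄`-linear span of `V` has
dimension at most `2` over `𝔽₄`, then `V` contains a nonzero vector `α` with
`𝔽₄·α ⊆ V`; in particular `V` contains a nonzero `𝔽₄`-subspace of `W`. -/
theorem stmt14 (F : Type*) [Field F] [Fintype F] (hF : Fintype.card F = 4)
    (W : Type*) [AddCommGroup W] [Module F W]
    (V : AddSubgroup W) (hV : Nat.card V = 8)
    (hspan : Module.finrank F (Submodule.span F (V : Set W)) ≤ 2) :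
    ∃ α ∈ V, α ≠ 0 ∧ (∀ c : F, c • α ∈ V) ∧
      ∃ U : Submodule F W, U ≠ ⊥ ∧ (U : Set W) ⊆ V := by
  classical
  -- characteristic 2
  have h4 : ((4 : ℕ) : F) = 0 := by rw [← hF]; exact FiniteField.cast_card_eq_zero F
  have h2 : (2 : F) = 0 := by
    have : (2 : F) * 2 = 0 := by
      have : ((4 : ℕ) : F) = (2 : F) * 2 := by norm_num
      rw [← this, h4]
    rcases mul_eq_zero.1 this with h | h <;> exact h
  -- pick ω ∉ {0, 1}
  obtain ⟨ω, hω⟩ : ∃ ω : F, ω ∉ ({0, 1} : Finset F) := by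
    by_contra h
    push_neg at h
    have : (Finset.univ : Finset F) ⊆ {0, 1} := fun x _ => h x
    have hle := Finset.card_le_card this
    simp [hF] at hle
  simp only [Finset.mem_insert, Finset.mem_singleton, not_or] at hω
  obtain ⟨hω0, hω1⟩ := hω
  -- F = {0, 1, ω, 1 + ω}
  have hFeq : ∀ c : F, c = 0 ∨ c = 1 ∨ c = ω ∨ c = 1 + ω := by
    intro c
    have hone : (1 : F) ≠ 1 + ω := by
      intro h; exact hω0 (by linear_combination -h)
    have h0ω : (0 : F) ≠ 1 + ω := by
      intro h
      apply hω1
      have : ω = -1 := by linear_combination -h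
      rw [this]
      have : (1 : F) + 1 = 0 := by rw [← h2]; ring
      linear_combination -this
    have hωω : ω ≠ 1 + ω := by
      intro h; exact one_ne_zero (by linear_combination -h : (1:F) = 0) |>.elim
    have hcard : ({0, 1, ω, 1 + ω} : Finset F).card = 4 := by
      rw [Finset.card_insert_of_notMem (by
          simp only [Finset.mem_insert, Finset.mem_singleton]
          push_neg
          exact ⟨fun h => one_ne_zero h.symm, fun h => hω0 h.symm, h0ω⟩),
        Finset.card_insert_of_notMem (by
          simp only [Finset.mem_insert, Finset.mem_singleton]
          push_neg
          exact ⟨fun h => hω1 h.symm, hone⟩),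
        Finset.card_insert_of_notMem (by simp only [Finset.mem_singleton]; exact hωω), Finset.card_singleton]
    have huniv : ({0, 1, ω, 1 + ω} : Finset F) = Finset.univ :=
      Finset.eq_univ_of_card _ (by rw [hcard, hF])
    have : c ∈ ({0, 1, ω, 1 + ω} : Finset F) := huniv ▸ Finset.mem_univ c
    simpa using this
  -- finiteness of V and the span
  have hVfin : Finite V := Nat.finite_of_card_ne_zero (by omega)
  have hVsetfin : (V : Set W).Finite := hVfin
  set S : Submodule F W := Submodule.span F (V : Set W) with hS
  have hSfd : FiniteDimensional F S := FiniteDimensional.span_of_finite F hVsetfin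
  have hSfin : Finite S := Module.finite_of_finite F
  have hcardS : Nat.card S ≤ 16 := by
    have := Fintype.ofFinite S
    have hc : Fintype.card S = Fintype.card F ^ Module.finrank F S :=
      Module.card_eq_pow_finrank
    rw [Nat.card_eq_fintype_card, hc, hF]
    calc 4 ^ Module.finrank F S ≤ 4 ^ 2 := Nat.pow_le_pow_right (by norm_num) hspan
      _ = 16 := by norm_num
  -- key claim: there is a nonzero β ∈ V with ω • β ∈ V
  obtain ⟨α, hαV, hαne, hωα⟩ : ∃ β ∈ V, β ≠ 0 ∧ ω • β ∈ V := by
    by_contra h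
    push_neg at h
    have hkey : ∀ β ∈ V, ω • β ∈ V → β = 0 := by
      intro β hβ hωβ
      by_contra hne
      exact (h β hβ hne) hωβ
    -- injective map V × V → S
    have hsub : (V : Set W) ⊆ S := Submodule.subset_span
    set f : V × V → S := fun p =>
      ⟨(p.1 : W) + ω • (p.2 : W),
        Submodule.add_mem _ (hsub p.1.2) (Submodule.smul_mem _ _ (hsub p.2.2))⟩ with hf
    have hinj : Function.Injective f := by
      intro ⟨a, b⟩ ⟨a', b'⟩ hab
      simp only [hf, Subtype.mk.injEq] at hab
      have hd : (a : W) - a' = ω • ((b' : W) - b) := by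
        rw [smul_sub, sub_eq_sub_iff_add_eq_add, hab]; abel
      have hbm : (b' : W) - b ∈ V := V.sub_mem b'.2 b.2
      have hωbm : ω • ((b' : W) - b) ∈ V := hd ▸ V.sub_mem a.2 a'.2
      have hb0 : (b' : W) - b = 0 := hkey _ hbm hωbm
      have hb : (b : W) = b' := (sub_eq_zero.1 hb0).symm
      have ha : (a : W) = a' := by
        rw [hb0, smul_zero] at hd
        exact sub_eq_zero.1 hd
      exact Prod.ext (Subtype.ext ha) (Subtype.ext hb)
    have hle : Nat.card (V × V) ≤ Nat.card S := Nat.card_le_card_of_injective f hinj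
    rw [Nat.card_prod, hV] at hle
    omega
  refine ⟨α, hαV, hαne, ?_, Submodule.span F {α}, ?_, ?_⟩
  · intro c
    rcases hFeq c with h | h | h | h <;> subst h
    · simpa using V.zero_mem
    · simpa using hαV
    · exact hωα
    · rw [add_smul, one_smul]; exact V.add_mem hαV hωα
  · simpa using hαne
  · intro x hx
    obtain ⟨c, rfl⟩ := Submodule.mem_span_singleton.1 hx
    rcases hFeq c with h | h | h | h <;> subst h
    · simpa using V.zero_mem
    · simpa using hαV
    · exact hωα
    · rw [add_smul, one_smul]; exact V.add_mem hαV hωα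
end
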